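/- Let a finite index set I partition a set E of positive measure into pieces E_i of positive measures m_i with ∑_i m_i = Meas(E). Let η_i > 0 and define η_E by 1/η_E = ∑_i (1/η_i) · (m_i / Meas(E)). Let f be an L² function on E, and define c_i = (η_E/η_i) · (1/Meas(E)) · ∫_E f for each i. Then η_E · ‖f‖²_{L²(E)} - ∑_i η_i · c_i² · m_i ≥ 0. -/

import Mathlib

/-! Summing the harmonic-mean relation shows that `∑ i, η i * c i ^ 2 * m i` equals
`η_E * (∫_E f)² / Meas(E)`, so the claim is `η_E` times the Cauchy–Schwarz inequality
`(∫_E f)² ≤ Meas(E) * ∫_E f²`. The latter is the nonpositivity of the discriminant of the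
nonnegative quadratic `t ↦ ∫_E (f - t)²`. -/

open MeasureTheory

section CauchySchwarz

variable {α : Type*} [MeasurableSpace α] {μ : Measure α} [IsFiniteMeasure μ] {f : α → ℝ}

theorem integral_sub_const_sq (hf : MemLp f 2 μ) (t : ℝ) :
    ∫ x, (f x - t) ^ 2 ∂μ = ∫ x, f x ^ 2 ∂μ - 2 * t * ∫ x, f x ∂μ + t ^ 2 * μ.real Set.univ := by
  have hf2 : Integrable (fun x => f x ^ 2) μ := hf.integrable_sq
  have hf1 : Integrable f μ := hf.integrable one_le_two
  have hexpand : (fun x => (f x - t) ^ 2) = fun x => f x ^ 2 - 2 * t * f x + t ^ 2 := by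
    ext x; ring
  have hlin : Integrable (fun x => f x ^ 2 - 2 * t * f x) μ := hf2.sub (hf1.const_mul _)
  rw [hexpand, integral_add hlin (integrable_const _),
    integral_sub hf2 (hf1.const_mul _), integral_const_mul, integral_const, smul_eq_mul]
  ring

theorem sq_integral_le_measureReal_mul_integral_sq (hf : MemLp f 2 μ) :
    (∫ x, f x ∂μ) ^ 2 ≤ μ.real Set.univ * ∫ x, f x ^ 2 ∂μ := by
  have hquad : ∀ t : ℝ,
      0 ≤ μ.real Set.univ * (t * t) + (-2 * ∫ x, f x ∂μ) * t + ∫ x, f x ^ 2 ∂μ := by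
    intro t
    have := integral_sub_const_sq hf t ▸ integral_nonneg fun x => sq_nonneg (f x - t)
    linarith
  have := discrim_le_zero hquad
  rw [discrim] at this
  linarith

end CauchySchwarz

theorem sum_mul_sq_mul_eq_of_harmonic_mean {ι : Type*} [Fintype ι] {m η : ι → ℝ}
    (hη : ∀ i, η i ≠ 0) {ηE M : ℝ} (hM : M ≠ 0)
    (hharm : 1 / ηE = ∑ i, (1 / η i) * (m i / M)) (a : ℝ) :
    ∑ i, η i * (ηE / η i * a) ^ 2 * m i = ηE * M * a ^ 2 := by
  have hterm : ∀ i,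
      η i * (ηE / η i * a) ^ 2 * m i = ηE ^ 2 * a ^ 2 * M * ((1 / η i) * (m i / M)) := by
    intro i
    field_simp [hη i]
  rw [Finset.sum_congr rfl fun i _ => hterm i, ← Finset.mul_sum, ← hharm]
  by_cases hηE : ηE = 0
  · simp [hηE]
  · field_simp

theorem condition_two_general_general {I : Type*} [Fintype I]
    (E : Set (EuclideanSpace ℝ (Fin 3)))
    (hEpos : 0 < (volume E).toReal)
    (m : I → ℝ)
    (η : I → ℝ) (hη : ∀ i, 0 < η i)
    (ηE : ℝ) (hηE : 0 < ηE)
    (hharm : 1 / ηE = ∑ i, (1 / η i) * (m i / (volume E).toReal))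
    (f : EuclideanSpace ℝ (Fin 3) → ℝ)
    (hf : MemLp f 2 (volume.restrict E))
    (c : I → ℝ)
    (hc : ∀ i, c i = (ηE / η i) * ((1 / (volume E).toReal) * ∫ x in E, f x)) :
    0 ≤ ηE * (∫ x in E, (f x) ^ 2) - ∑ i, η i * (c i) ^ 2 * m i := by
  set M := (volume E).toReal
  have : IsFiniteMeasure (volume.restrict E) :=
    isFiniteMeasure_restrict.2 (ENNReal.toReal_pos_iff.1 hEpos).2.ne
  have hCS : (∫ x in E, f x) ^ 2 ≤ M * ∫ x in E, f x ^ 2 := by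
    have := sq_integral_le_measureReal_mul_integral_sq hf
    rwa [measureReal_restrict_apply_univ] at this
  have hweighted : ∑ i, η i * c i ^ 2 * m i = ηE * ((∫ x in E, f x) ^ 2 / M) := by
    simp only [hc]
    rw [sum_mul_sq_mul_eq_of_harmonic_mean (fun i => (hη i).ne') hEpos.ne' hharm]
    field_simp
  rw [hweighted, ← mul_sub]
  exact mul_nonneg hηE.le (sub_nonneg.2 ((div_le_iff₀' hEpos).2 hCS))

theorem condition_two_general {I : Type*} [Fintype I] [Nonempty I]
    (E : Set (EuclideanSpace ℝ (Fin 3))) (hE : MeasurableSet E)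
    (hEpos : 0 < (volume E).toReal)
    (m : I → ℝ) (hm : ∀ i, 0 < m i) (hsum : ∑ i, m i = (volume E).toReal)
    (η : I → ℝ) (hη : ∀ i, 0 < η i)
    (ηE : ℝ) (hηE : 0 < ηE)
    (hharm : 1 / ηE = ∑ i, (1 / η i) * (m i / (volume E).toReal))
    (f : EuclideanSpace ℝ (Fin 3) → ℝ)
    (hf : MemLp f 2 (volume.restrict E))
    (c : I → ℝ)
    (hc : ∀ i, c i = (ηE / η i) * ((1 / (volume E).toReal) * ∫ x in E, f x)) :
    0 ≤ ηE * (∫ x in E, (f x) ^ 2) - ∑ i, η i * (c i) ^ 2 * m i :=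
  condition_two_general_general E hEpos m η hη ηE hηE hharm f hf c hc
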